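/- Let G be a group, ρ a unitary representation of G on a complex Hilbert space H, v ∈ H a vector with ‖v‖ = 1, and ε > 0. If Re⟨ρ(g)v, v⟩ > 1 − ε for every g ∈ G, then there exists a vector w ∈ H with ρ(g)w = w for all g ∈ G and ‖w − v‖ ≤ √(2ε). -/

import Mathlib

/-!
The fixed vector `w` is the point of minimal norm in the closed convex hull `C` of the orbit of
`v`. Each `ρ g` is a linear isometry mapping `C` into itself, so `ρ g w` is again a point of `C`
of minimal norm, and by strict convexity of the norm that point is unique. Since
`‖ρ g v - v‖² = 2 - 2 Re ⟪ρ g v, v⟫ < 2ε`, the orbit, hence `C`, lies in the closed ball of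
radius `√(2ε)` about `v`.
-/

open scoped InnerProductSpace

open Set Metric

theorem ContinuousLinearMap.mapsTo_closedConvexHull {𝕜 E F : Type*} [Semiring 𝕜] [PartialOrder 𝕜]
    [AddCommGroup E] [Module 𝕜 E] [TopologicalSpace E]
    [AddCommGroup F] [Module 𝕜 F] [TopologicalSpace F]
    (f : E →L[𝕜] F) {s : Set E} {t : Set F} (h : MapsTo f s t) :
    MapsTo f (closedConvexHull 𝕜 s) (closedConvexHull 𝕜 t) :=
  closedConvexHull_min (fun _ hx ↦ subset_closedConvexHull (h hx))
    (convex_closedConvexHull.linear_preimage f.toLinearMap)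
    (isClosed_closedConvexHull.preimage f.continuous)

theorem Convex.eq_of_isMinOn_norm_of_norm_eq {E : Type*} [NormedAddCommGroup E] [NormedSpace ℝ E]
    [StrictConvexSpace ℝ E] {K : Set E} (hK : Convex ℝ K) {w x : E} (hw : w ∈ K) (hx : x ∈ K)
    (hmin : IsMinOn (‖·‖) K w) (hxw : ‖x‖ = ‖w‖) : x = w := by
  by_contra hne
  have hmid : (1 / 2 : ℝ) • (x + w) ∈ K := by
    rw [smul_add]
    exact hK hx hw (by norm_num) (by norm_num) (by norm_num)
  have hlt := (norm_midpoint_lt_iff hxw).2 hne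
  have hle : ‖w‖ ≤ ‖(1 / 2 : ℝ) • (x + w)‖ := hmin hmid
  linarith

theorem exists_isMinOn_norm_of_isComplete_of_convex {E : Type*} [NormedAddCommGroup E]
    [InnerProductSpace ℝ E] {K : Set E} (hne : K.Nonempty) (hc : IsComplete K)
    (hK : Convex ℝ K) : ∃ w ∈ K, IsMinOn (‖·‖) K w := by
  obtain ⟨w, hw, hmin⟩ := exists_norm_eq_iInf_of_complete_convex hne hc hK 0
  refine ⟨w, hw, fun x hx ↦ ?_⟩
  have hle := ciInf_le (f := fun y : K ↦ ‖(0 : E) - y‖)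
    ⟨0, forall_mem_range.2 fun _ ↦ norm_nonneg _⟩ ⟨x, hx⟩
  rwa [← hmin, zero_sub, zero_sub, norm_neg, norm_neg] at hle

theorem Unitary.norm_apply_sub_self_le_sqrt {𝕜 H : Type*} [RCLike 𝕜] [NormedAddCommGroup H]
    [InnerProductSpace 𝕜 H] [CompleteSpace H] (u : unitary (H →L[𝕜] H)) {v : H} (hv : ‖v‖ = 1)
    {ε : ℝ} (h : 1 - ε ≤ RCLike.re ⟪(u : H →L[𝕜] H) v, v⟫_𝕜) :
    ‖(u : H →L[𝕜] H) v - v‖ ≤ Real.sqrt (2 * ε) := by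
  refine Real.le_sqrt_of_sq_le ?_
  rw [@norm_sub_sq 𝕜, Unitary.norm_map, hv]
  linarith

theorem MonoidHom.mapsTo_range_unitary_apply {G H 𝕜 : Type*} [Group G] [RCLike 𝕜]
    [NormedAddCommGroup H] [InnerProductSpace 𝕜 H] [CompleteSpace H]
    (ρ : G →* unitary (H →L[𝕜] H)) (v : H) (g : G) :
    MapsTo (ρ g : H →L[𝕜] H) (Set.range fun k ↦ (ρ k : H →L[𝕜] H) v)
      (Set.range fun k ↦ (ρ k : H →L[𝕜] H) v) := by
  rintro _ ⟨k, rfl⟩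
  exact ⟨g * k, by simp⟩

theorem exists_fixed_vector_near {G : Type*} [Group G] {H : Type*} [NormedAddCommGroup H]
    [InnerProductSpace ℂ H] [CompleteSpace H]
    (ρ : G →* unitary (H →L[ℂ] H)) (v : H) (hv : ‖v‖ = 1) (ε : ℝ)
    (h : ∀ g : G, 1 - ε < (⟪(ρ g : H →L[ℂ] H) v, v⟫_ℂ).re) :
    ∃ w : H, (∀ g : G, (ρ g : H →L[ℂ] H) w = w) ∧ ‖w - v‖ ≤ Real.sqrt (2 * ε) := by
  let := InnerProductSpace.complexToReal (G := H)
  set C := closedConvexHull ℝ (Set.range fun g ↦ (ρ g : H →L[ℂ] H) v)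
  have hC : Convex ℝ C := convex_closedConvexHull
  have hvC : v ∈ C := subset_closedConvexHull ⟨1, by simp⟩
  obtain ⟨w, hwC, hmin⟩ :=
    exists_isMinOn_norm_of_isComplete_of_convex ⟨v, hvC⟩ isClosed_closedConvexHull.isComplete hC
  refine ⟨w, fun g ↦ ?_, ?_⟩
  · have hgw : (ρ g : H →L[ℂ] H) w ∈ C :=
      ((ρ g : H →L[ℂ] H).restrictScalars ℝ).mapsTo_closedConvexHull
        (ρ.mapsTo_range_unitary_apply v g) hwC
    exact hC.eq_of_isMinOn_norm_of_norm_eq hwC hgw hmin (Unitary.norm_map _ _)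
  · have hball : C ⊆ closedBall v (Real.sqrt (2 * ε)) := by
      refine closedConvexHull_min ?_ (convex_closedBall _ _) isClosed_closedBall
      rintro _ ⟨g, rfl⟩
      exact mem_closedBall_iff_norm.2 (Unitary.norm_apply_sub_self_le_sqrt (ρ g) hv (h g).le)
    exact mem_closedBall_iff_norm.1 (hball hwC)
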